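/- arXiv:2202.13122 — 4 statements merged into one kernel-verified Lean document; each statement's English description precedes it below -/
import Mathlib

section
/- Let P be a symmetric positive semidefinite block matrix P = [[Z, B], [Bᵀ, X]] with Z ∈ ℝ^{p×p} symmetric, B ∈ ℝ^{p×n}, X ∈ ℝ^{n×n} symmetric. Then the minimum over all z ∈ ℝ^p and x ∈ ℝ^n \ {0} of (1/‖x‖²) · [z; x]ᵀ P [z; x] equals λ_min(X − Bᵀ Z⁻ B), where Z⁻ is a generalized inverse of Z (e.g., the Moore–Penrose pseudoinverse). The minimum is attained at z = −Z⁻ B v, x = v, where v is an eigenvector of X − Bᵀ Z⁻ B for its minimum eigenvalue. -/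
/-!
Positive semidefiniteness of `P` gives `ker Z ⊆ ker Bᵀ`, so `B = Z K` for some `K`. Then
`Bᵀ G B = Kᵀ Z K` for every generalized inverse `G` of `Z`, and completing the square gives
`[z; x]ᵀ P [z; x] = (z + K x)ᵀ Z (z + K x) + xᵀ (X - Bᵀ G B) x`.
The first term is nonnegative and vanishes at `z = -G B x`; the second is at least
`λ_min ‖x‖²`, with equality at an eigenvector for `λ_min`.
-/

open Matrix

-- Moore–Penrose pseudoinverse via its four characterizing properties.
open Classical in
noncomputable def moorePenrose {p : ℕ} (Z : Matrix (Fin p) (Fin p) ℝ) :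
    Matrix (Fin p) (Fin p) ℝ :=
  if h : ∃ W : Matrix (Fin p) (Fin p) ℝ,
      Z * W * Z = Z ∧ W * Z * W = W ∧ (Z * W)ᵀ = Z * W ∧ (W * Z)ᵀ = W * Z
  then h.choose else 0

open scoped ComplexOrder

namespace Matrix

/-- `cfc (·⁻¹) Z` solves the Penrose equations since `x * x⁻¹ * x = x` also at `x = 0`. -/
theorem IsHermitian.exists_penrose_equations {m : Type*} [Fintype m] [DecidableEq m]
    {Z : Matrix m m ℝ} (hZ : Z.IsHermitian) :
    ∃ W : Matrix m m ℝ,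
      Z * W * Z = Z ∧ W * Z * W = W ∧ (Z * W)ᵀ = Z * W ∧ (W * Z)ᵀ = W * Z := by
  have hcont (f : ℝ → ℝ) : ContinuousOn f (spectrum ℝ Z) := (finite_spectrum Z).continuousOn f
  have hmul (f g : ℝ → ℝ) : cfc f Z * cfc g Z = cfc (fun x => f x * g x) Z :=
    (cfc_mul f g Z (hcont f) (hcont g)).symm
  have hsymm (f : ℝ → ℝ) : (cfc f Z)ᵀ = cfc f Z := by
    rw [← conjTranspose_eq_transpose_of_trivial]
    exact (cfc_predicate f Z).star_eq
  have hid : cfc (fun x : ℝ => x) Z = Z := cfc_id' ℝ Z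
  refine ⟨cfc (·⁻¹ : ℝ → ℝ) Z, ?_, ?_, ?_, ?_⟩
  · nth_rw 1 3 4 [← hid]
    simp only [hmul, mul_inv_mul_cancel]
  · nth_rw 2 [← hid]
    rw [hmul, hmul]
    congr 1 with x
    simpa using mul_inv_mul_cancel x⁻¹
  · nth_rw 1 3 [← hid]
    rw [hmul, hsymm]
  · nth_rw 2 4 [← hid]
    rw [hmul, hsymm]

theorem mul_moorePenrose_mul_self {p : ℕ} {Z : Matrix (Fin p) (Fin p) ℝ} (hZ : Z.IsHermitian) :
    Z * moorePenrose Z * Z = Z := by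
  rw [moorePenrose, dif_pos hZ.exists_penrose_equations]
  exact hZ.exists_penrose_equations.choose_spec.1

theorem PosSemidef.fromBlocks₂₁_mulVec_eq_zero {𝕜 m n : Type*} [RCLike 𝕜] [Fintype m]
    [Fintype n] {A : Matrix m m 𝕜} {B : Matrix m n 𝕜} {C : Matrix n m 𝕜} {D : Matrix n n 𝕜}
    (hP : (fromBlocks A B C D).PosSemidef) {u : m → 𝕜} (hu : A *ᵥ u = 0) : C *ᵥ u = 0 := by
  have hPu : fromBlocks A B C D *ᵥ Sum.elim u 0 = Sum.elim (0 : m → 𝕜) (C *ᵥ u) := by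
    simp [fromBlocks_mulVec, hu]
  have hq : star (Sum.elim u 0) ⬝ᵥ fromBlocks A B C D *ᵥ Sum.elim u 0 = 0 := by
    simp [hPu, dotProduct, Fintype.sum_sum_type]
  simpa [hPu] using congrArg (· ∘ Sum.inr) ((hP.dotProduct_mulVec_zero_iff _).1 hq)

theorem PosSemidef.fromBlocks₂₁_mul_eq_zero {𝕜 m n l : Type*} [RCLike 𝕜] [Fintype m]
    [Fintype n] [Fintype l] {A : Matrix m m 𝕜} {B : Matrix m n 𝕜} {C : Matrix n m 𝕜}
    {D : Matrix n n 𝕜} (hP : (fromBlocks A B C D).PosSemidef) {M : Matrix m l 𝕜}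
    (hM : A * M = 0) : C * M = 0 :=
  ext_iff_mulVec.2 fun v => by
    rw [← mulVec_mulVec, hP.fromBlocks₂₁_mulVec_eq_zero (by rw [mulVec_mulVec, hM, zero_mulVec]),
      zero_mulVec]

/-- `ker Z ⊆ ker Bᵀ`, and `1 - G * Z` maps into `ker Z`. -/
theorem eq_mul_of_posSemidef_fromBlocks {m n : Type*} [Fintype m] [DecidableEq m] [Fintype n]
    {Z G : Matrix m m ℝ} {B : Matrix m n ℝ} {X : Matrix n n ℝ}
    (hP : (fromBlocks Z B Bᵀ X).PosSemidef) (hG : Z * G * Z = Z) : B = Z * (Gᵀ * B) := by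
  have hZ : Zᵀ = Z := isHermitian_iff_isSymm.1 (isHermitian_fromBlocks_iff.1 hP.isHermitian).1
  have hker : Bᵀ * (1 - G * Z) = 0 := hP.fromBlocks₂₁_mul_eq_zero <| by
    rw [Matrix.mul_sub, Matrix.mul_one, ← Matrix.mul_assoc, hG, sub_self]
  rw [Matrix.mul_sub, Matrix.mul_one, sub_eq_zero] at hker
  simpa [transpose_mul, hZ, Matrix.mul_assoc] using congrArg transpose hker

theorem transpose_mul_mul_eq_of_mul_mul_self {R m n : Type*} [CommRing R] [Fintype m]
    {Z G : Matrix m m R} (hZ : Zᵀ = Z) (hG : Z * G * Z = Z) (K : Matrix m n R) :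
    (Z * K)ᵀ * G * (Z * K) = Kᵀ * Z * K := by
  calc (Z * K)ᵀ * G * (Z * K) = Kᵀ * (Z * G * Z) * K := by
        simp only [transpose_mul, hZ, Matrix.mul_assoc]
    _ = Kᵀ * Z * K := by rw [hG]

theorem sumElim_dotProduct_fromBlocks_mulVec_sumElim_eq {R m n : Type*} [CommRing R] [Fintype m]
    [Fintype n] {Z : Matrix m m R} (hZ : Zᵀ = Z) (K : Matrix m n R) (X : Matrix n n R)
    (z : m → R) (x : n → R) :
    Sum.elim z x ⬝ᵥ fromBlocks Z (Z * K) (Z * K)ᵀ X *ᵥ Sum.elim z x =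
      (z + K *ᵥ x) ⬝ᵥ Z *ᵥ (z + K *ᵥ x) + x ⬝ᵥ (X - Kᵀ * Z * K) *ᵥ x := by
  have hcross : x ⬝ᵥ (Z * K)ᵀ *ᵥ z = z ⬝ᵥ Z *ᵥ (K *ᵥ x) := by
    rw [dotProduct_mulVec, vecMul_transpose, dotProduct_comm, mulVec_mulVec]
  have hsym : K *ᵥ x ⬝ᵥ Z *ᵥ z = z ⬝ᵥ Z *ᵥ (K *ᵥ x) := by
    rw [dotProduct_mulVec, ← mulVec_transpose, hZ, dotProduct_comm]
  have hschur : x ⬝ᵥ (Kᵀ * Z * K) *ᵥ x = K *ᵥ x ⬝ᵥ Z *ᵥ (K *ᵥ x) := by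
    rw [← mulVec_mulVec, ← mulVec_mulVec, dotProduct_mulVec, vecMul_transpose, dotProduct_comm]
  rw [fromBlocks_mulVec, sumElim_dotProduct_sumElim, sub_mulVec, dotProduct_sub, hschur]
  simp only [Sum.elim_comp_inl, Sum.elim_comp_inr, mulVec_add, dotProduct_add, add_dotProduct,
    hcross, hsym, ← mulVec_mulVec]
  ring

theorem setOf_mulVec_eq_smul_eq_spectrum {K n : Type*} [Field K] [Fintype n] [DecidableEq n]
    (A : Matrix n n K) : {μ : K | ∃ v : n → K, v ≠ 0 ∧ A *ᵥ v = μ • v} = spectrum K A := by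
  ext μ
  rw [← spectrum_toLin', ← Module.End.hasEigenvalue_iff_mem_spectrum, Module.End.hasEigenvalue_iff,
    Submodule.ne_bot_iff]
  simp [and_comm]

open scoped MatrixOrder in
theorem IsHermitian.sInf_spectrum_mul_dotProduct_self_le {n : Type*} [Fintype n] [DecidableEq n]
    {S : Matrix n n ℝ} (hS : S.IsHermitian) (x : n → ℝ) :
    sInf (spectrum ℝ S) * (x ⬝ᵥ x) ≤ x ⬝ᵥ S *ᵥ x := by
  have hle : algebraMap ℝ _ (sInf (spectrum ℝ S)) ≤ S :=
    (algebraMap_le_iff_le_spectrum hS.isSelfAdjoint).2 fun μ hμ =>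
      csInf_le (finite_spectrum S).bddBelow hμ
  have hpsd := (le_iff.1 hle).dotProduct_mulVec_nonneg x
  simpa [sub_mulVec, Algebra.algebraMap_eq_smul_one, smul_mulVec, sub_nonneg, mul_comm] using hpsd

end Matrix

theorem schur_complement_partial_min {p n : ℕ}
    (Z : Matrix (Fin p) (Fin p) ℝ) (B : Matrix (Fin p) (Fin n) ℝ)
    (X : Matrix (Fin n) (Fin n) ℝ)
    (hP : (fromBlocks Z B Bᵀ X).PosSemidef)
    (S : Matrix (Fin n) (Fin n) ℝ) (hS : S = X - Bᵀ * moorePenrose Z * B)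
    (lmin : ℝ)
    (hlmin : lmin = sInf {μ : ℝ | ∃ v : Fin n → ℝ, v ≠ 0 ∧ S.mulVec v = μ • v}) :
    (∀ (z : Fin p → ℝ) (x : Fin n → ℝ), x ≠ 0 →
        lmin ≤ (1 / ∑ i, x i ^ 2) *
          (Sum.elim z x ⬝ᵥ (fromBlocks Z B Bᵀ X).mulVec (Sum.elim z x))) ∧
      (∀ v : Fin n → ℝ, v ≠ 0 → S.mulVec v = lmin • v →
        (1 / ∑ i, v i ^ 2) *
            (Sum.elim (-(moorePenrose Z * B).mulVec v) v ⬝ᵥ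
              (fromBlocks Z B Bᵀ X).mulVec
                (Sum.elim (-(moorePenrose Z * B).mulVec v) v)) = lmin) := by
  obtain ⟨hZ, -, -, hX⟩ := isHermitian_fromBlocks_iff.1 hP.isHermitian
  have hZt : Zᵀ = Z := isHermitian_iff_isSymm.1 hZ
  have hG := mul_moorePenrose_mul_self hZ
  have hZpsd : Z.PosSemidef := hP.submatrix Sum.inl
  obtain ⟨K, rfl⟩ : ∃ K, B = Z * K := ⟨_, eq_mul_of_posSemidef_fromBlocks hP hG⟩
  rw [transpose_mul_mul_eq_of_mul_mul_self hZt hG] at hS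
  have hq (z : Fin p → ℝ) (x : Fin n → ℝ) :
      Sum.elim z x ⬝ᵥ fromBlocks Z (Z * K) (Z * K)ᵀ X *ᵥ Sum.elim z x =
        (z + K *ᵥ x) ⬝ᵥ Z *ᵥ (z + K *ᵥ x) + x ⬝ᵥ S *ᵥ x := by
    rw [hS, sumElim_dotProduct_fromBlocks_mulVec_sumElim_eq hZt]
  have hSh : S.IsHermitian := hS ▸ hX.sub (by simpa using isHermitian_conjTranspose_mul_mul K hZ)
  rw [setOf_mulVec_eq_smul_eq_spectrum] at hlmin
  have hsq (x : Fin n → ℝ) : ∑ i, x i ^ 2 = x ⬝ᵥ x := by simp [dotProduct, sq]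
  have hpos {x : Fin n → ℝ} (hx : x ≠ 0) : 0 < x ⬝ᵥ x := by
    simpa using dotProduct_self_star_pos_iff.2 hx
  refine ⟨fun z x hx => ?_, fun v hv hev => ?_⟩
  · rw [one_div_mul_eq_div, hsq, le_div_iff₀ (hpos hx), hq, hlmin]
    have hsquare := hZpsd.dotProduct_mulVec_nonneg (z + K *ᵥ x)
    rw [star_trivial] at hsquare
    linarith [hSh.sInf_spectrum_mul_dotProduct_self_le x]
  · have hcenter : Z *ᵥ (-((moorePenrose Z * (Z * K)) *ᵥ v) + K *ᵥ v) = 0 := by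
      rw [mulVec_add, mulVec_neg, mulVec_mulVec, mulVec_mulVec, ← Matrix.mul_assoc,
        ← Matrix.mul_assoc, hG, neg_add_cancel]
    rw [hq, hcenter, dotProduct_zero, zero_add, hev, dotProduct_smul, smul_eq_mul, hsq,
      one_div_mul_eq_div, mul_div_cancel_right₀ _ (hpos hv).ne']
end

section
/- If P = [[Z, B], [Bᵀ, X]] is a symmetric positive semidefinite real matrix with Z ∈ ℝ^{p×p}, B ∈ ℝ^{p×n}, X ∈ ℝ^{n×n}, and Z⁻ denotes the Moore–Penrose pseudoinverse of Z, then Z Z⁻ B = B. -/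
open Matrix

/-!
Positive semidefiniteness of `P` gives `ker Z ⊆ ker Bᵀ`: if `Z u = 0`, the quadratic form of `P`
vanishes at `(u, 0)`, so `P (u, 0) = (0, Bᵀ u)` is zero. By the Penrose conditions `E = 1 - Z Z⁻`
is symmetric with `E Z = 0`, so the columns of `E` lie in `ker Z`; hence `Bᵀ E = 0`, and
transposing gives `E B = 0`, i.e. `Z Z⁻ B = B`. For symmetric `Z` a matrix satisfying the Penrose
conditions exists, so `moorePenrose Z` is one.
-/

namespace Matrix

variable {l m n R 𝕜 : Type*} [Fintype m]

open scoped ComplexOrder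

def IsMoorePenroseInverse [CommRing R] (Z W : Matrix m m R) : Prop :=
  Z * W * Z = Z ∧ W * Z * W = W ∧ (Z * W)ᵀ = Z * W ∧ (W * Z)ᵀ = W * Z

/-- Since `0⁻¹ = 0` in `ℝ`, applying `x ↦ x⁻¹` to the spectrum inverts `Z` on its range and
kills its kernel. -/
theorem IsHermitian.isMoorePenroseInverse_cfc_inv [DecidableEq m] {Z : Matrix m m ℝ}
    (hZ : Z.IsHermitian) : IsMoorePenroseInverse Z (cfc (·⁻¹ : ℝ → ℝ) Z) := by
  set W := cfc (·⁻¹ : ℝ → ℝ) Z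
  have hc (f : ℝ → ℝ) : ContinuousOn f (spectrum ℝ Z) := Z.finite_real_spectrum.continuousOn f
  have hZWZ : cfc (fun x : ℝ => x * x⁻¹ * x) Z = Z * W * Z := by
    rw [cfc_mul _ _ Z (hc _) (hc _), cfc_mul _ _ Z (hc _) (hc _), cfc_id' ℝ Z]
  have hWZW : cfc (fun x : ℝ => x⁻¹ * x * x⁻¹) Z = W * Z * W := by
    rw [cfc_mul _ _ Z (hc _) (hc _), cfc_mul _ _ Z (hc _) (hc _), cfc_id' ℝ Z]
  have hinv (x : ℝ) : x⁻¹ * x * x⁻¹ = x⁻¹ := by simpa using mul_inv_mul_cancel x⁻¹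
  have hWt : Wᵀ = W :=
    (isHermitian_iff_isSymm.mp (IsSelfAdjoint.cfc : IsSelfAdjoint W).isHermitian).eq
  have hZt : Zᵀ = Z := (isHermitian_iff_isSymm.mp hZ).eq
  have hZW : Commute Z W := by
    simpa only [cfc_id' ℝ Z] using cfc_commute_cfc (fun x : ℝ => x) (·⁻¹) Z
  refine ⟨?_, ?_, ?_, ?_⟩
  · simpa only [mul_inv_mul_cancel, cfc_id' ℝ Z] using hZWZ.symm
  · simpa only [hinv] using hWZW.symm
  · rw [transpose_mul, hWt, hZt, hZW.eq]
  · rw [transpose_mul, hWt, hZt, hZW.eq]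

theorem moorePenrose_isMoorePenroseInverse {p : ℕ} {Z : Matrix (Fin p) (Fin p) ℝ}
    (h : ∃ W, IsMoorePenroseInverse Z W) : IsMoorePenroseInverse Z (moorePenrose Z) := by
  have h' : ∃ W : Matrix (Fin p) (Fin p) ℝ,
      Z * W * Z = Z ∧ W * Z * W = W ∧ (Z * W)ᵀ = Z * W ∧ (W * Z)ᵀ = W * Z := h
  rw [moorePenrose, dif_pos h']
  exact h'.choose_spec

theorem PosSemidef.conjTranspose_mulVec_eq_zero_of_mulVec_eq_zero [Fintype n] [RCLike 𝕜]
    {A : Matrix m m 𝕜} {B : Matrix m n 𝕜} {D : Matrix n n 𝕜}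
    (hP : (fromBlocks A B Bᴴ D).PosSemidef) {u : m → 𝕜} (hu : A *ᵥ u = 0) : Bᴴ *ᵥ u = 0 := by
  set x : m ⊕ n → 𝕜 := Sum.elim u 0
  have hPx : fromBlocks A B Bᴴ D *ᵥ x = Sum.elim (0 : m → 𝕜) (Bᴴ *ᵥ u) := by
    simp [x, fromBlocks_mulVec, hu]
  have hPx_zero : fromBlocks A B Bᴴ D *ᵥ x = 0 :=
    (hP.dotProduct_mulVec_zero_iff x).mp (by simp [x, hPx, dotProduct, Fintype.sum_sum_type])
  simpa [hPx] using congrArg (· ∘ Sum.inr) hPx_zero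

theorem PosSemidef.conjTranspose_mul_eq_zero_of_mul_eq_zero [Fintype n] [RCLike 𝕜]
    {A : Matrix m m 𝕜} {B : Matrix m n 𝕜} {D : Matrix n n 𝕜}
    (hP : (fromBlocks A B Bᴴ D).PosSemidef) {M : Matrix m l 𝕜} (hM : A * M = 0) :
    Bᴴ * M = 0 := by
  ext i j
  exact congrFun (hP.conjTranspose_mulVec_eq_zero_of_mulVec_eq_zero (u := fun k => M k j)
    (funext fun i => congrFun (congrFun hM i) j)) i

theorem IsMoorePenroseInverse.mul_mul_eq_self [CommRing R] [DecidableEq m] {Z W : Matrix m m R}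
    (hW : IsMoorePenroseInverse Z W) (hZ : Zᵀ = Z) {B : Matrix m n R}
    (hB : ∀ M : Matrix m m R, Z * M = 0 → Bᵀ * M = 0) : Z * W * B = B := by
  obtain ⟨hZWZ, -, hZW, -⟩ := hW
  set E := 1 - Z * W with hE
  have hEt : Eᵀ = E := by rw [transpose_sub, transpose_one, hZW]
  have hEZ : E * Z = 0 := by rw [sub_mul, one_mul, hZWZ, sub_self]
  have hZE : Z * E = 0 := by simpa [transpose_mul, hEt, hZ] using congrArg transpose hEZ
  have hEB : E * B = 0 := by simpa [transpose_mul, hEt] using congrArg transpose (hB E hZE)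
  rwa [hE, Matrix.sub_mul, Matrix.one_mul, sub_eq_zero, eq_comm] at hEB

end Matrix

theorem psd_block_range_condition {p n : ℕ}
    (Z : Matrix (Fin p) (Fin p) ℝ) (B : Matrix (Fin p) (Fin n) ℝ)
    (X : Matrix (Fin n) (Fin n) ℝ)
    (hP : (fromBlocks Z B Bᵀ X).PosSemidef) :
    Z * moorePenrose Z * B = B := by
  rw [← conjTranspose_eq_transpose_of_trivial] at hP
  have hZ : Z.IsHermitian := (isHermitian_fromBlocks_iff.mp hP.isHermitian).1
  have hW := moorePenrose_isMoorePenroseInverse ⟨_, hZ.isMoorePenroseInverse_cfc_inv⟩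
  refine hW.mul_mul_eq_self (isHermitian_iff_isSymm.mp hZ).eq fun M hM => ?_
  simpa only [conjTranspose_eq_transpose_of_trivial] using
    hP.conjTranspose_mul_eq_zero_of_mul_eq_zero hM
end

section
/- Let M be a symmetric (p+n)×(p+n) real matrix. M is partially positive definite with respect to the last n components (i.e., M is positive semidefinite and [z; x]ᵀ M [z; x] > 0 for every [z; x] with x ≠ 0) if and only if there exists a class-K function κ such that κ(‖x‖) ≤ [z; x]ᵀ M [z; x] for all z ∈ ℝ^p and x ∈ ℝ^n. -/
/-!
Positive semidefiniteness makes the form a sum of squares, `yᵀ M y = ‖B y‖²` for a linear map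
`B`. Positivity whenever `x ≠ 0` says exactly that the kernel of `B` lies in the kernel of the
projection `y ↦ x`, so this projection factors linearly through `B`; in finite dimension that
factor is bounded, whence `‖x‖² ≤ C · yᵀ M y` and `κ r = r² / C` works. Conversely `κ ≥ 0` gives
semidefiniteness and `κ r > 0` for `r > 0` gives strict positivity.
-/

open Matrix

/-- A class-K function: continuous and strictly increasing on `[0, ∞)`,
nonnegative there, with `κ 0 = 0`. -/
def IsClassK (κ : ℝ → ℝ) : Prop :=
  ContinuousOn κ (Set.Ici 0) ∧ StrictMonoOn κ (Set.Ici 0) ∧ κ 0 = 0 ∧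
    ∀ r ∈ Set.Ici (0 : ℝ), 0 ≤ κ r

theorem LinearMap.exists_comp_eq_of_ker_le {K V W U : Type*} [DivisionRing K]
    [AddCommGroup V] [Module K V] [AddCommGroup W] [Module K W] [AddCommGroup U] [Module K U]
    (f : V →ₗ[K] W) (g : V →ₗ[K] U) (hfg : ker f ≤ ker g) :
    ∃ h : W →ₗ[K] U, h ∘ₗ f = g := by
  obtain ⟨h, hh⟩ :=
    LinearMap.exists_extend ((ker f).liftQ g hfg ∘ₗ f.quotKerEquivRange.symm.toLinearMap)
  refine ⟨h, LinearMap.ext fun v => ?_⟩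
  simpa using LinearMap.congr_fun hh ⟨f v, LinearMap.mem_range_self f v⟩

theorem LinearMap.exists_norm_le_mul_norm_of_ker_le {𝕜 V W U : Type*}
    [NontriviallyNormedField 𝕜] [CompleteSpace 𝕜] [AddCommGroup V] [Module 𝕜 V]
    [NormedAddCommGroup W] [NormedSpace 𝕜 W] [FiniteDimensional 𝕜 W]
    [NormedAddCommGroup U] [NormedSpace 𝕜 U]
    (f : V →ₗ[𝕜] W) (g : V →ₗ[𝕜] U) (hfg : ker f ≤ ker g) :
    ∃ C > 0, ∀ v, ‖g v‖ ≤ C * ‖f v‖ := by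
  obtain ⟨h, rfl⟩ := f.exists_comp_eq_of_ker_le g hfg
  refine ⟨‖LinearMap.toContinuousLinearMap h‖ + 1, by positivity, fun v => ?_⟩
  calc ‖h (f v)‖ = ‖LinearMap.toContinuousLinearMap h (f v)‖ := rfl
    _ ≤ ‖LinearMap.toContinuousLinearMap h‖ * ‖f v‖ := ContinuousLinearMap.le_opNorm _ _
    _ ≤ _ := by gcongr; linarith

open scoped MatrixOrder in
theorem Matrix.PosSemidef.exists_linearMap_norm_sq_eq {ι : Type*} [Fintype ι]
    {M : Matrix ι ι ℝ} (hM : M.PosSemidef) :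
    ∃ f : (ι → ℝ) →ₗ[ℝ] EuclideanSpace ℝ ι, ∀ y, ‖f y‖ ^ 2 = y ⬝ᵥ M *ᵥ y := by
  classical
  obtain ⟨B, rfl⟩ := CStarAlgebra.nonneg_iff_eq_star_mul_self.mp hM.nonneg
  refine ⟨(WithLp.linearEquiv 2 ℝ (ι → ℝ)).symm.toLinearMap ∘ₗ B.mulVecLin, fun y => ?_⟩
  rw [EuclideanSpace.real_norm_sq_eq, ← mulVec_mulVec, dotProduct_mulVec, star_eq_conjTranspose,
    conjTranspose_eq_transpose_of_trivial, vecMul_transpose]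
  simp [dotProduct, sq]

theorem Matrix.PosSemidef.exists_pos_mul_norm_sq_le {ι E : Type*} [Fintype ι]
    [NormedAddCommGroup E] [NormedSpace ℝ E] {M : Matrix ι ι ℝ} (hM : M.PosSemidef)
    (g : (ι → ℝ) →ₗ[ℝ] E) (hg : ∀ y, y ⬝ᵥ M *ᵥ y = 0 → g y = 0) :
    ∃ μ > 0, ∀ y, μ * ‖g y‖ ^ 2 ≤ y ⬝ᵥ M *ᵥ y := by
  obtain ⟨f, hf⟩ := hM.exists_linearMap_norm_sq_eq
  obtain ⟨C, hC, hgf⟩ := f.exists_norm_le_mul_norm_of_ker_le g fun y hy =>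
    hg y (by rw [← hf, LinearMap.mem_ker.mp hy, norm_zero, sq, zero_mul])
  refine ⟨(C ^ 2)⁻¹, by positivity, fun y => ?_⟩
  rw [inv_mul_le_iff₀ (by positivity), ← hf, ← mul_pow]
  exact pow_le_pow_left₀ (norm_nonneg _) (hgf y) 2

theorem isClassK_const_mul_sq {μ : ℝ} (hμ : 0 < μ) : IsClassK fun r => μ * r ^ 2 :=
  ⟨by fun_prop,
    fun _ ha _ _ hab => mul_lt_mul_of_pos_left (pow_lt_pow_left₀ hab ha two_ne_zero) hμ,
    by simp, fun _ _ => by positivity⟩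

theorem IsClassK.pos {κ : ℝ → ℝ} (hκ : IsClassK κ) {r : ℝ} (hr : 0 < r) : 0 < κ r :=
  hκ.2.2.1 ▸ hκ.2.1 Set.self_mem_Ici hr.le hr

theorem partial_posdef_iff_classK {p n : ℕ}
    (M : Matrix (Fin p ⊕ Fin n) (Fin p ⊕ Fin n) ℝ) (hM : M.IsSymm) :
    (M.PosSemidef ∧ ∀ (z : Fin p → ℝ) (x : Fin n → ℝ), x ≠ 0 →
        0 < Sum.elim z x ⬝ᵥ M.mulVec (Sum.elim z x)) ↔
      ∃ κ : ℝ → ℝ, IsClassK κ ∧ ∀ (z : Fin p → ℝ) (x : Fin n → ℝ),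
        κ (Real.sqrt (∑ i, x i ^ 2)) ≤ Sum.elim z x ⬝ᵥ M.mulVec (Sum.elim z x) := by
  constructor
  · rintro ⟨hpsd, hpos⟩
    let xPart : (Fin p ⊕ Fin n → ℝ) →ₗ[ℝ] EuclideanSpace ℝ (Fin n) :=
      (WithLp.linearEquiv 2 ℝ (Fin n → ℝ)).symm.toLinearMap ∘ₗ LinearMap.funLeft ℝ ℝ Sum.inr
    obtain ⟨μ, hμ, hbound⟩ := hpsd.exists_pos_mul_norm_sq_le xPart fun y hy => by
      by_contra hx
      have hx' : y ∘ Sum.inr ≠ 0 := fun h => hx (by simp [xPart, LinearMap.funLeft, h])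
      simpa [Sum.elim_comp_inl_inr, hy] using hpos (y ∘ Sum.inl) _ hx'
    refine ⟨fun r => μ * r ^ 2, isClassK_const_mul_sq hμ, fun z x => ?_⟩
    dsimp only
    rw [Real.sq_sqrt (by positivity)]
    simpa [xPart, EuclideanSpace.real_norm_sq_eq] using hbound (Sum.elim z x)
  · rintro ⟨κ, hκ, hbound⟩
    refine ⟨.of_dotProduct_mulVec_nonneg (isHermitian_iff_isSymm.mpr hM) fun y => ?_,
      fun z x hx => (hκ.pos ?_).trans_le (hbound z x)⟩
    · simpa [Sum.elim_comp_inl_inr] using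
        (hκ.2.2.2 _ (Real.sqrt_nonneg _)).trans (hbound (y ∘ Sum.inl) (y ∘ Sum.inr))
    · obtain ⟨i, hi⟩ := Function.ne_iff.mp hx
      exact Real.sqrt_pos.mpr (Finset.sum_pos' (fun j _ => sq_nonneg (x j))
        ⟨i, Finset.mem_univ i, pow_two_pos_of_ne_zero hi⟩)
end

section
/- Let P and Q be symmetric real matrices with P A + Aᵀ P = −Q, where Q is partially positive definite w.r.t. the last n components (Q ⪰ 0 and yᵀ Q y > 0 whenever the last n components of y are nonzero). If P is positive semidefinite, then P is also partially positive definite w.r.t. the last n components. -/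
/-!
If `P y = 0`, then `yᵀ (P A + Aᵀ P) y = (P y)ᵀ A y + yᵀ Aᵀ (P y) = 0`, so by the Lyapunov equation
`yᵀ Q y = 0`. For `P ⪰ 0`, `yᵀ P y = 0` forces `P y = 0`; hence `yᵀ P y` can only vanish where
`yᵀ Q y` does, and the partial positive definiteness of `Q` passes to `P`.
-/

open Matrix

namespace Matrix

variable {ι R : Type*} [Fintype ι] [CommRing R]

theorem dotProduct_mulVec_mul_add_transpose_mul_eq_zero {P : Matrix ι ι R} (hP : P.IsSymm)
    (A : Matrix ι ι R) {y : ι → R} (hy : P *ᵥ y = 0) :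
    y ⬝ᵥ (P * A + Aᵀ * P) *ᵥ y = 0 := by
  have hyP : y ᵥ* P = 0 := by rw [← mulVec_transpose, hP, hy]
  rw [add_mulVec, dotProduct_add, dotProduct_mulVec, ← vecMul_vecMul, hyP, ← mulVec_mulVec, hy,
    zero_vecMul, zero_dotProduct, mulVec_zero, dotProduct_zero, add_zero]

theorem dotProduct_mulVec_eq_zero_of_lyapunov {A P Q : Matrix ι ι R} (hP : P.IsSymm)
    (hLyap : P * A + Aᵀ * P = -Q) {y : ι → R} (hy : P *ᵥ y = 0) :
    y ⬝ᵥ Q *ᵥ y = 0 := by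
  have h := dotProduct_mulVec_mul_add_transpose_mul_eq_zero hP A hy
  rwa [hLyap, neg_mulVec, dotProduct_neg, neg_eq_zero] at h

end Matrix

theorem lyapunov_solution_partial_posdef_general {p n : ℕ}
    (A P Q : Matrix (Fin p ⊕ Fin n) (Fin p ⊕ Fin n) ℝ)
    (hPsymm : P.IsSymm)
    (hLyap : P * A + Aᵀ * P = -Q)
    (hQpd : ∀ (z : Fin p → ℝ) (x : Fin n → ℝ), x ≠ 0 →
      0 < Sum.elim z x ⬝ᵥ Q.mulVec (Sum.elim z x))
    (hPpsd : P.PosSemidef) :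
    ∀ (z : Fin p → ℝ) (x : Fin n → ℝ), x ≠ 0 →
      0 < Sum.elim z x ⬝ᵥ P.mulVec (Sum.elim z x) := by
  intro z x hx
  set y := Sum.elim z x
  have hPy_nonneg : 0 ≤ y ⬝ᵥ P *ᵥ y := by
    simpa only [star_trivial] using hPpsd.dotProduct_mulVec_nonneg y
  refine hPy_nonneg.lt_of_ne fun hPy_zero => ?_
  have hPy : P *ᵥ y = 0 := by
    rw [← hPpsd.dotProduct_mulVec_zero_iff, star_trivial, hPy_zero.symm]
  exact (hQpd z x hx).ne' (dotProduct_mulVec_eq_zero_of_lyapunov hPsymm hLyap hPy)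

theorem lyapunov_solution_partial_posdef {p n : ℕ}
    (A P Q : Matrix (Fin p ⊕ Fin n) (Fin p ⊕ Fin n) ℝ)
    (hPsymm : P.IsSymm) (hQsymm : Q.IsSymm)
    (hLyap : P * A + Aᵀ * P = -Q)
    (hQpsd : Q.PosSemidef)
    (hQpd : ∀ (z : Fin p → ℝ) (x : Fin n → ℝ), x ≠ 0 →
      0 < Sum.elim z x ⬝ᵥ Q.mulVec (Sum.elim z x))
    (hPpsd : P.PosSemidef) :
    ∀ (z : Fin p → ℝ) (x : Fin n → ℝ), x ≠ 0 →
      0 < Sum.elim z x ⬝ᵥ P.mulVec (Sum.elim z x) :=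
  lyapunov_solution_partial_posdef_general A P Q hPsymm hLyap hQpd hPpsd
end
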